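/- arXiv:1406.4904 — 5 statements merged into one kernel-verified Lean document; each statement's English description precedes it below -/
import Mathlib

section
/- Suppose u satisfies Condition 2.1 with constant K. Let Z = (z_1,…,z_N) be a finite list of points of ℝ^p and suppose an M-estimate of scatter V for Z about t exists. Then for every linear subspace S of ℝ^p with 0 ≤ dim S ≤ p−1, the fraction of indices i ∈ {1,…,N} with z_i − t ∈ S is at most 1 − (p − dim S)/K. -/
open Matrix Finset Filter

noncomputable section

/-- Condition 2.1 with constant `K`: `u` is nonnegative, non-increasing and continuous on
`(0,∞)`; `ψ(s) = s·u(s)` is non-decreasing, strictly increasing wherever `ψ(s) < K`,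
and `K = sup_{s>0} ψ(s)` (in particular `ψ` is bounded); and `K > p`. -/
structure Cond21 (p : ℕ) (u : ℝ → ℝ) (K : ℝ) : Prop where
  nonneg : ∀ ⦃s : ℝ⦄, 0 < s → 0 ≤ u s
  antitone : ∀ ⦃s₁ s₂ : ℝ⦄, 0 < s₁ → s₁ ≤ s₂ → u s₂ ≤ u s₁
  cont : ContinuousOn u (Set.Ioi 0)
  psi_mono : ∀ ⦃s₁ s₂ : ℝ⦄, 0 < s₁ → s₁ ≤ s₂ → s₁ * u s₁ ≤ s₂ * u s₂
  psi_strictMono : ∀ ⦃s₁ s₂ : ℝ⦄, 0 < s₁ → s₁ < s₂ → s₁ * u s₁ < K → s₁ * u s₁ < s₂ * u s₂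
  psi_lub : IsLUB {y : ℝ | ∃ s : ℝ, 0 < s ∧ y = s * u s} K
  K_gt_p : (p : ℝ) < K

/-- `V` is an M-estimate of scatter for the list `z` about the center `t`:
`V` is positive definite (hence symmetric) and satisfies
`V = (1/N) Σᵢ u(sᵢ) (zᵢ - t)(zᵢ - t)ᵀ` with `sᵢ = (zᵢ - t)ᵀ V⁻¹ (zᵢ - t)`,
the `i`-th summand being the zero matrix when `zᵢ = t`. -/
def IsScatterMEstimate {p N : ℕ} (u : ℝ → ℝ) (t : Fin p → ℝ)
    (z : Fin N → Fin p → ℝ) (V : Matrix (Fin p) (Fin p) ℝ) : Prop :=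
  V.PosDef ∧
    V = (N : ℝ)⁻¹ • ∑ i : Fin N,
      if z i = t then (0 : Matrix (Fin p) (Fin p) ℝ)
      else u ((z i - t) ⬝ᵥ (V⁻¹ *ᵥ (z i - t))) • Matrix.vecMulVec (z i - t) (z i - t)

/-- A list of points of `ℝᵖ` is in general position about `t` if any `p` of the
differences (point − t), taken with distinct indices, are linearly independent. -/
def GenPosAbout {p n : ℕ} (t : Fin p → ℝ) (x : Fin n → Fin p → ℝ) : Prop :=
  ∀ f : Fin p → Fin n, Function.Injective f →
    LinearIndependent ℝ (fun j : Fin p => x (f j) - t)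

/-- Squared Euclidean distance from `t` to `z`. -/
def sqDist {p : ℕ} (t z : Fin p → ℝ) : ℝ := (z - t) ⬝ᵥ (z - t)

/-- The unit direction `θ(z) = (z - t)/‖z - t‖` (Euclidean norm). -/
def dirFrom {p : ℕ} (t z : Fin p → ℝ) : Fin p → ℝ :=
  (Real.sqrt (sqDist t z))⁻¹ • (z - t)

/-- `Y ∈ C_{1,ρ,m}(X)`: for every choice of `p` points of `Z = X ∪ Y` with distinct
indices, all different from `t`, the smallest eigenvalue of `Σⱼ θ(z_{i(j)})θ(z_{i(j)})ᵀ`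
exceeds `ρ`; this is expressed via the Rayleigh quotient characterization of the
smallest eigenvalue of a symmetric matrix. -/
def InC1 {p n m : ℕ} (ρ : ℝ) (t : Fin p → ℝ) (X : Fin n → Fin p → ℝ)
    (Y : Fin m → Fin p → ℝ) : Prop :=
  ∀ f : Fin p → Fin (n + m), Function.Injective f →
    (∀ j, Fin.append X Y (f j) ≠ t) →
    ∀ v : Fin p → ℝ, v ⬝ᵥ v = 1 →
      ρ < v ⬝ᵥ ((∑ j : Fin p,
        Matrix.vecMulVec (dirFrom t (Fin.append X Y (f j)))
          (dirFrom t (Fin.append X Y (f j)))) *ᵥ v)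

/-- `Y ∈ C_{2,r,m}(X)`: every contaminating point satisfies `‖yᵢ - t‖² > r`. -/
def InC2 {p m : ℕ} (r : ℝ) (t : Fin p → ℝ) (Y : Fin m → Fin p → ℝ) : Prop :=
  ∀ i : Fin m, r < sqDist t (Y i)

/-- `Y ∈ C_{3,B,m}(X)`: every contaminating point satisfies `‖yᵢ - t‖² < B`. -/
def InC3 {p m : ℕ} (B : ℝ) (t : Fin p → ℝ) (Y : Fin m → Fin p → ℝ) : Prop :=
  ∀ i : Fin m, sqDist t (Y i) < B

end

/-!
Write `⟪a, b⟫ = aᵀ V⁻¹ b`. The fixed-point equation for `V` says exactly that the vectors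
`xᵢ = zᵢ - t`, with weights `wᵢ = u(sᵢ)/N`, form a Parseval frame for this inner product:
`‖q‖² = Σᵢ wᵢ ⟪xᵢ, q⟫²`, while `sᵢ = ‖xᵢ‖²`. Summing the frame identity over an orthonormal
basis of `S^⊥` gives `p - dim S` on the left; on the right the `xᵢ ∈ S` contribute nothing and,
by Bessel, every other `xᵢ` contributes at most `wᵢ sᵢ = ψ(sᵢ)/N ≤ K/N`.
-/

open Module
open scoped RealInnerProductSpace MatrixOrder

open Classical in
theorem finrank_orthogonal_le_sum_of_parseval {ι E : Type*} [Fintype ι] [NormedAddCommGroup E]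
    [InnerProductSpace ℝ E] [FiniteDimensional ℝ E] {y : ι → E} {c : ι → ℝ}
    (hframe : ∀ q, ‖q‖ ^ 2 = ∑ i, c i * ⟪y i, q⟫ ^ 2) (T : Submodule ℝ E)
    (hc : ∀ i, y i ∉ T → 0 ≤ c i) :
    (finrank ℝ Tᗮ : ℝ) ≤ ∑ i with y i ∉ T, c i * ‖y i‖ ^ 2 := by
  let b := stdOrthonormalBasis ℝ Tᗮ
  have hbessel (x : E) : ∑ k, ⟪x, b k⟫ ^ 2 ≤ ‖x‖ ^ 2 := by
    simpa only [real_inner_comm, Real.norm_eq_abs, sq_abs, Function.comp_apply,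
      Submodule.coe_subtypeₗᵢ, Submodule.subtype_apply] using
      (b.orthonormal.comp_linearIsometry Tᗮ.subtypeₗᵢ).sum_inner_products_le x (s := univ)
  have horth {x : E} (hx : x ∈ T) (k) : ⟪x, b k⟫ = 0 :=
    Submodule.inner_right_of_mem_orthogonal hx (b k).2
  calc (finrank ℝ Tᗮ : ℝ)
    _ = ∑ k, ‖(b k : E)‖ ^ 2 := by simp [Submodule.norm_coe, b.norm_eq_one]
    _ = ∑ i, c i * ∑ k, ⟪y i, b k⟫ ^ 2 := by
      simp_rw [hframe, mul_sum]
      exact sum_comm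
    _ ≤ ∑ i, if y i ∉ T then c i * ‖y i‖ ^ 2 else 0 := by
      gcongr with i
      split_ifs with hi
      · simp [horth hi]
      · exact mul_le_mul_of_nonneg_left (hbessel _) (hc i hi)
    _ = ∑ i with y i ∉ T, c i * ‖y i‖ ^ 2 := (sum_filter _ _).symm

section WeightedOuterProducts

variable {n ι : Type*} [Fintype n] [Fintype ι]

theorem dotProduct_sum_smul_vecMulVec_mulVec (w : ι → ℝ) (x : ι → n → ℝ) (r : n → ℝ) :
    r ⬝ᵥ ((∑ i, w i • vecMulVec (x i) (x i)) *ᵥ r) = ∑ i, w i * (x i ⬝ᵥ r) ^ 2 := by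
  simp only [sum_mulVec, dotProduct_sum, smul_mulVec, vecMulVec_mulVec]
  refine sum_congr rfl fun i _ => ?_
  simp only [op_smul_eq_smul, dotProduct_smul, smul_eq_mul, dotProduct_comm r (x i)]
  ring

variable [DecidableEq n]

theorem Matrix.PosDef.exists_linearEquiv_inner_eq {G : Matrix n n ℝ} (hG : G.PosDef) :
    ∃ e : (n → ℝ) ≃ₗ[ℝ] EuclideanSpace ℝ n, ∀ a b, ⟪e a, e b⟫ = a ⬝ᵥ (G *ᵥ b) := by
  obtain ⟨B, rfl⟩ := CStarAlgebra.nonneg_iff_eq_star_mul_self.mp hG.posSemidef.nonneg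
  have hB : IsUnit B.det := by
    have := hG.det_pos.ne'
    rw [star_eq_conjTranspose, det_mul] at this
    exact isUnit_iff_ne_zero.mpr (right_ne_zero_of_mul this)
  let _ := B.invertibleOfIsUnitDet hB
  refine ⟨(B.toLinearEquiv' inferInstance).trans (WithLp.linearEquiv 2 ℝ (n → ℝ)).symm,
    fun a b => ?_⟩
  change ⟪WithLp.toLp 2 (B *ᵥ a), WithLp.toLp 2 (B *ᵥ b)⟫ = _
  rw [EuclideanSpace.inner_eq_star_dotProduct]
  simp [star_eq_conjTranspose, ← mulVec_mulVec, dotProduct_mulVec, vecMul_transpose,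
    dotProduct_comm]

theorem Matrix.PosDef.norm_sq_eq_sum_mul_inner_sq {V : Matrix n n ℝ} (hV : V.PosDef)
    {w : ι → ℝ} {x : ι → n → ℝ} (hVx : V = ∑ i, w i • vecMulVec (x i) (x i))
    {e : (n → ℝ) ≃ₗ[ℝ] EuclideanSpace ℝ n} (he : ∀ a b, ⟪e a, e b⟫ = a ⬝ᵥ (V⁻¹ *ᵥ b))
    (q : EuclideanSpace ℝ n) : ‖q‖ ^ 2 = ∑ i, w i * ⟪e (x i), q⟫ ^ 2 := by
  have hdet : IsUnit V.det := (isUnit_iff_isUnit_det V).mp hV.isUnit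
  obtain ⟨r, rfl⟩ : ∃ r, e (V *ᵥ r) = q := ⟨V⁻¹ *ᵥ e.symm q, by
    rw [mulVec_mulVec, mul_nonsing_inv _ hdet, one_mulVec, e.apply_symm_apply]⟩
  have hinv (a : n → ℝ) : ⟪e a, e (V *ᵥ r)⟫ = a ⬝ᵥ r := by
    rw [he, mulVec_mulVec, nonsing_inv_mul _ hdet, one_mulVec]
  simp_rw [← real_inner_self_eq_norm_sq, hinv]
  rw [dotProduct_comm, ← dotProduct_sum_smul_vecMulVec_mulVec, ← hVx]

open Classical in
theorem Matrix.PosDef.card_sub_finrank_le_sum {V : Matrix n n ℝ} (hV : V.PosDef)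
    {w : ι → ℝ} {x : ι → n → ℝ} (hVx : V = ∑ i, w i • vecMulVec (x i) (x i))
    (hw : ∀ i, x i ≠ 0 → 0 ≤ w i) (S : Submodule ℝ (n → ℝ)) :
    (Fintype.card n : ℝ) - finrank ℝ S ≤ ∑ i with x i ∉ S, w i * (x i ⬝ᵥ (V⁻¹ *ᵥ x i)) := by
  obtain ⟨e, he⟩ := hV.inv.exists_linearEquiv_inner_eq
  set T := S.map (e : (n → ℝ) →ₗ[ℝ] EuclideanSpace ℝ n)
  have hmem (a : n → ℝ) : e a ∈ T ↔ a ∈ S := by simp [T, Submodule.mem_map_equiv]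
  have hdim : (finrank ℝ Tᗮ : ℝ) = Fintype.card n - finrank ℝ S := by
    have := T.finrank_add_finrank_orthogonal
    rw [LinearEquiv.finrank_map_eq, finrank_euclideanSpace] at this
    rw [eq_sub_iff_add_eq']
    exact_mod_cast this
  have hframe := finrank_orthogonal_le_sum_of_parseval (hV.norm_sq_eq_sum_mul_inner_sq hVx he) T
    fun i hi => hw i (ne_of_mem_of_not_mem S.zero_mem ((hmem _).not.mp hi)).symm
  simpa only [hdim, hmem, ← real_inner_self_eq_norm_sq, he] using hframe

end WeightedOuterProducts

open Classical in
theorem IsScatterMEstimate.sub_finrank_le {p N : ℕ} {u : ℝ → ℝ} {K : ℝ} {t : Fin p → ℝ}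
    {z : Fin N → Fin p → ℝ} {V : Matrix (Fin p) (Fin p) ℝ} (hV : IsScatterMEstimate u t z V)
    (hu : ∀ s, 0 < s → 0 ≤ u s) (hψ : ∀ s, 0 < s → s * u s ≤ K)
    (S : Submodule ℝ (Fin p → ℝ)) :
    (p : ℝ) - finrank ℝ S ≤ K / N * #{i | z i - t ∉ S} := by
  obtain ⟨hpd, hVeq⟩ := hV
  set s := fun i => (z i - t) ⬝ᵥ (V⁻¹ *ᵥ (z i - t))
  set w := fun i => (N : ℝ)⁻¹ * if z i = t then 0 else u (s i)
  have hVx : V = ∑ i, w i • vecMulVec (z i - t) (z i - t) := by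
    conv_lhs => rw [hVeq]
    simp only [smul_sum, w, mul_smul, ite_smul, zero_smul]
    rfl
  have hs (i) (hi : z i - t ≠ 0) : 0 < s i := hpd.inv.dotProduct_mulVec_pos hi
  have hw (i) (hi : z i - t ≠ 0) : 0 ≤ w i := by
    simp only [w, if_neg (sub_ne_zero.mp hi)]
    exact mul_nonneg (by positivity) (hu _ (hs i hi))
  have hterm (i) (hi : z i - t ∉ S) : w i * s i ≤ K / N := by
    have hi0 : z i - t ≠ 0 := fun h => hi (h ▸ S.zero_mem)
    simp only [w, if_neg (sub_ne_zero.mp hi0), div_eq_inv_mul, mul_assoc, mul_comm (u _)]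
    exact mul_le_mul_of_nonneg_left (hψ _ (hs i hi0)) (by positivity)
  calc (p : ℝ) - finrank ℝ S
    _ ≤ ∑ i with z i - t ∉ S, w i * s i := by
      simpa only [Fintype.card_fin] using hpd.card_sub_finrank_le_sum hVx hw S
    _ ≤ ∑ i with z i - t ∉ S, K / N := sum_le_sum fun i hi => hterm i (mem_filter.mp hi).2
    _ = K / N * #{i | z i - t ∉ S} := by rw [sum_const, nsmul_eq_mul, mul_comm]

theorem statement0_general (p N : ℕ) (t : Fin p → ℝ) (u : ℝ → ℝ) (K : ℝ)
    (hu : Cond21 p u K) (z : Fin N → Fin p → ℝ)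
    (V : Matrix (Fin p) (Fin p) ℝ) (hV : IsScatterMEstimate u t z V)
    (S : Submodule ℝ (Fin p → ℝ)) :
    (Nat.card {i : Fin N // z i - t ∈ S} : ℝ) / N
      ≤ 1 - ((p : ℝ) - (Module.finrank ℝ S : ℝ)) / K := by
  classical
  have hK : 0 < K := (Nat.cast_nonneg p).trans_lt hu.K_gt_p
  have key := hV.sub_finrank_le (fun _ hs => hu.nonneg hs)
    (fun s hs => hu.psi_lub.1 ⟨s, hs, rfl⟩) S
  have hcard : (Nat.card {i // z i - t ∈ S} : ℝ) + #{i | z i - t ∉ S} = N := by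
    rw [Nat.card_eq_fintype_card, Fintype.card_subtype]
    exact_mod_cast (card_filter_add_card_filter_not (s := univ) _).trans (card_fin N)
  rcases N.eq_zero_or_pos with rfl | hN
  · simp only [CharP.cast_eq_zero, div_zero, zero_mul] at key ⊢
    linarith [div_nonpos_of_nonpos_of_nonneg key hK.le]
  · have hN : (0 : ℝ) < N := Nat.cast_pos.mpr hN
    rw [div_mul_eq_mul_div, le_div_iff₀ hN] at key
    calc (Nat.card {i // z i - t ∈ S} : ℝ) / N
      _ = 1 - #{i | z i - t ∉ S} / N := by field_simp; linarith
      _ ≤ 1 - ((p : ℝ) - finrank ℝ S) / K := by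
        refine sub_le_sub_left ?_ 1
        rw [div_le_div_iff₀ hK hN]
        linarith

/-- Lemma 2.1.ii (necessity): if an M-estimate of scatter `V` for `Z` about `t` exists,
then for every linear subspace `S` of `ℝᵖ` with `dim S ≤ p - 1`, the fraction of
indices `i` with `zᵢ - t ∈ S` is at most `1 - (p - dim S)/K`. -/
theorem statement0 (p N : ℕ) (hp : 1 ≤ p) (t : Fin p → ℝ) (u : ℝ → ℝ) (K : ℝ)
    (hu : Cond21 p u K) (z : Fin N → Fin p → ℝ)
    (V : Matrix (Fin p) (Fin p) ℝ) (hV : IsScatterMEstimate u t z V)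
    (S : Submodule ℝ (Fin p → ℝ)) (hS : Module.finrank ℝ S ≤ p - 1) :
    (Nat.card {i : Fin N // z i - t ∈ S} : ℝ) / N
      ≤ 1 - ((p : ℝ) - (Module.finrank ℝ S : ℝ)) / K :=
  statement0_general p N t u K hu z V hV S
end

section
/- (Theorem 3.1, breakdown by inliers at the center.) Suppose u satisfies Condition 2.1 with constant K and ε_m = m/(n+m) > 1 − p/K. Let Y = (t, t, …, t) consist of m copies of the center t. Then no M-estimate of scatter for the contaminated sample Z = X ∪ Y about t exists. -/
open Matrix Finset Filter

noncomputable section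

/-!
Take the trace of `V⁻¹ · (N V) = Σᵢ u(sᵢ) V⁻¹ (zᵢ - t)(zᵢ - t)ᵀ`. The left side is `N p`; on the
right each summand is `ψ(sᵢ) ≤ K`, except that the `m` points sitting at the center contribute
nothing. Hence `N p ≤ n K`, i.e. `ε_m ≤ 1 - p/K`.
-/

theorem Cond21.mul_le {p : ℕ} {u : ℝ → ℝ} {K : ℝ} (hu : Cond21 p u K) ⦃s : ℝ⦄ (hs : 0 < s) :
    s * u s ≤ K :=
  hu.psi_lub.1 ⟨s, hs, rfl⟩

theorem trace_mul_vecMulVec_self {ι : Type*} [Fintype ι] (A : Matrix ι ι ℝ) (w : ι → ℝ) :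
    trace (A * vecMulVec w w) = w ⬝ᵥ (A *ᵥ w) := by
  rw [mul_vecMulVec, trace_vecMulVec, dotProduct_comm]

section ScatterMEstimate

variable {p N : ℕ} {u : ℝ → ℝ} {K : ℝ} {t : Fin p → ℝ} {V : Matrix (Fin p) (Fin p) ℝ}

def scatterTerm (u : ℝ → ℝ) (t : Fin p → ℝ) (V : Matrix (Fin p) (Fin p) ℝ) (x : Fin p → ℝ) :
    Matrix (Fin p) (Fin p) ℝ :=
  if x = t then 0 else u ((x - t) ⬝ᵥ (V⁻¹ *ᵥ (x - t))) • vecMulVec (x - t) (x - t)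

theorem trace_inv_mul_scatterTerm_le (hψ : ∀ ⦃s : ℝ⦄, 0 < s → s * u s ≤ K) (hV : V.PosDef)
    (x : Fin p → ℝ) :
    trace (V⁻¹ * scatterTerm u t V x) ≤ if x = t then 0 else K := by
  unfold scatterTerm
  split_ifs with hx
  · simp
  · rw [Matrix.mul_smul, trace_smul, trace_mul_vecMulVec_self, smul_eq_mul, mul_comm]
    exact hψ (hV.inv.dotProduct_mulVec_pos (sub_ne_zero.mpr hx))

theorem IsScatterMEstimate.natCast_mul_le (hψ : ∀ ⦃s : ℝ⦄, 0 < s → s * u s ≤ K)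
    {z : Fin N → Fin p → ℝ} (hV : IsScatterMEstimate u t z V) :
    (p : ℝ) * N ≤ K * #{i | z i ≠ t} := by
  obtain ⟨hpd, heq : V = (N : ℝ)⁻¹ • ∑ i, scatterTerm u t V (z i)⟩ := hV
  rcases Nat.eq_zero_or_pos N with rfl | hN
  · simp
  have hsum : ∑ i, scatterTerm u t V (z i) = (N : ℝ) • V :=
    ((eq_inv_smul_iff₀ (by positivity)).mp heq).symm
  have hdet : IsUnit V.det := isUnit_iff_ne_zero.mpr hpd.det_pos.ne'
  calc (p : ℝ) * N = ∑ i, trace (V⁻¹ * scatterTerm u t V (z i)) := by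
        rw [← trace_sum, ← Finset.mul_sum, hsum, Matrix.mul_smul, nonsing_inv_mul _ hdet,
          trace_smul, trace_one, Fintype.card_fin, smul_eq_mul, mul_comm]
    _ ≤ ∑ i, if z i = t then 0 else K :=
        Finset.sum_le_sum fun i _ => trace_inv_mul_scatterTerm_le hψ hpd (z i)
    _ = K * #{i | z i ≠ t} := by
        rw [Finset.sum_ite, Finset.sum_const_zero, zero_add, Finset.sum_const, nsmul_eq_mul,
          mul_comm]

end ScatterMEstimate

theorem card_append_const_ne_le {α : Type*} [DecidableEq α] {n m : ℕ} (x : Fin n → α) (t : α) :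
    #{i | Fin.append x (fun _ : Fin m => t) i ≠ t} ≤ n := by
  calc #{i | Fin.append x (fun _ : Fin m => t) i ≠ t}
      ≤ #((univ : Finset (Fin n)).map (Fin.castAddEmb m)) := by
        refine Finset.card_le_card fun i hi => ?_
        induction i using Fin.addCases with
        | left j => simp
        | right j => simp at hi
    _ = n := by simp

theorem statement9_general (p n m : ℕ) (hm : 1 ≤ m)
    (t : Fin p → ℝ) (u : ℝ → ℝ) (K : ℝ) (hu : Cond21 p u K)
    (X : Fin n → Fin p → ℝ)
    (heps : 1 - (p : ℝ) / K < (m : ℝ) / ((n : ℝ) + m)) :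
    ¬ ∃ V : Matrix (Fin p) (Fin p) ℝ,
      IsScatterMEstimate u t (Fin.append X (fun _ : Fin m => t)) V := by
  rintro ⟨V, hV⟩
  have hK : 0 < K := (Nat.cast_nonneg p).trans_lt hu.K_gt_p
  have hN : (0 : ℝ) < n + m := by positivity
  have hbound := hV.natCast_mul_le hu.mul_le
  have hcard : (#{i | Fin.append X (fun _ : Fin m => t) i ≠ t} : ℝ) ≤ n := by
    exact_mod_cast card_append_const_ne_le X t
  have heps' : (n : ℝ) * K < p * (n + m) := by
    have hfrac : (n : ℝ) / (n + m) < p / K := by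
      rw [show (n : ℝ) / (n + m) = 1 - m / (n + m) by field_simp; ring]
      linarith
    exact (div_lt_div_iff₀ hN hK).mp hfrac
  push_cast at hbound
  nlinarith

/-- Theorem 3.1 (breakdown by inliers at the center): if `ε_m = m/(n+m) > 1 - p/K` and
`Y` consists of `m` copies of the center `t`, then no M-estimate of scatter for
`Z = X ∪ Y` about `t` exists. -/
theorem statement9 (p n m : ℕ) (hp : 1 ≤ p) (hm : 1 ≤ m) (hn : p * (p - 1) < n)
    (t : Fin p → ℝ) (u : ℝ → ℝ) (K : ℝ) (hu : Cond21 p u K)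
    (X : Fin n → Fin p → ℝ) (hX : GenPosAbout t X)
    (heps : 1 - (p : ℝ) / K < (m : ℝ) / ((n : ℝ) + m)) :
    ¬ ∃ V : Matrix (Fin p) (Fin p) ℝ,
      IsScatterMEstimate u t (Fin.append X (fun _ : Fin m => t)) V :=
  statement9_general p n m hm t u K hu X heps
end
end

section
/- (Theorem 3.1, breakdown by a distant coplanar point mass.) Suppose u satisfies Condition 2.1 with constant K and ε_m = m/(n+m) ≥ 1/K. Fix a unit vector θ ∈ ℝ^p and for r > 0 let Y_r consist of m copies of the point t + rθ. Then there is no constant C < ∞ such that for every r > 0 an M-estimate of scatter V_r for X ∪ Y_r about t exists with trace(V_r) + trace(V_r⁻¹) ≤ C. In particular, taking m = 1, breakdown occurs when n + 1 ≤ K. -/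
/-!
Test the fixed-point equation of `V = V_r` against `w = V⁻¹θ`. Writing `q = θᵀV⁻¹θ`, the point
mass contributes `m ψ(r²q) q`, so `(n + m) q = Σᵢ u(sᵢ) ((xᵢ - t)ᵀw)² + m ψ(r²q) q`.
If the traces of `V` and `V⁻¹` are at most `C`, then `q ≥ 1/C` and all `sᵢ ≤ C B`; as the
`xᵢ - t` span `ℝᵖ`, the sum over `X` is at least `δ q` for a fixed `δ > 0`. Hence
`m ψ(r²/C) ≤ n + m - δ` for every `r`, while `m ψ(s) → m K ≥ n + m` as `s → ∞`.
-/

open Matrix Finset Filter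

noncomputable section

section DotProduct

variable {ι κ : Type*} [Fintype ι] [Fintype κ]

theorem sq_dotProduct_le (x y : ι → ℝ) : (x ⬝ᵥ y) ^ 2 ≤ (x ⬝ᵥ x) * (y ⬝ᵥ y) := by
  simpa only [dotProduct, sq] using sum_mul_sq_le_sq_mul_sq univ x y

theorem Matrix.mulVec_dotProduct_mulVec_self_le (A : Matrix κ ι ℝ) (v : ι → ℝ) :
    (A *ᵥ v) ⬝ᵥ (A *ᵥ v) ≤ (Aᵀ * A).trace * (v ⬝ᵥ v) :=
  calc (A *ᵥ v) ⬝ᵥ (A *ᵥ v) = ∑ k, (A k ⬝ᵥ v) ^ 2 := by simp only [dotProduct, sq, mulVec]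
    _ ≤ ∑ k, (A k ⬝ᵥ A k) * (v ⬝ᵥ v) := sum_le_sum fun k _ => sq_dotProduct_le _ _
    _ = (Aᵀ * A).trace * (v ⬝ᵥ v) := by
      simp only [← sum_mul, trace, diag, mul_apply, transpose_apply, dotProduct]
      rw [sum_comm]

theorem Matrix.dotProduct_transpose_mul_mulVec (B : Matrix κ ι ℝ) (x y : ι → ℝ) :
    x ⬝ᵥ ((Bᵀ * B) *ᵥ y) = (B *ᵥ x) ⬝ᵥ (B *ᵥ y) := by
  rw [← mulVec_mulVec, dotProduct_mulVec, vecMul_transpose]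

end DotProduct

namespace Matrix

variable {ι : Type*} [Fintype ι]

open scoped MatrixOrder in
theorem PosSemidef.exists_eq_transpose_mul_self {M : Matrix ι ι ℝ} (hM : M.PosSemidef) :
    ∃ B : Matrix ι ι ℝ, M = Bᵀ * B := by
  classical
  exact CStarAlgebra.nonneg_iff_eq_star_mul_self.mp hM.nonneg

theorem PosSemidef.dotProduct_mulVec_le_trace_mul {M : Matrix ι ι ℝ} (hM : M.PosSemidef)
    (v : ι → ℝ) : v ⬝ᵥ (M *ᵥ v) ≤ M.trace * (v ⬝ᵥ v) := by
  obtain ⟨B, rfl⟩ := hM.exists_eq_transpose_mul_self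
  rw [dotProduct_transpose_mul_mulVec]
  exact mulVec_dotProduct_mulVec_self_le B v

theorem PosSemidef.sq_dotProduct_mulVec_le {M : Matrix ι ι ℝ} (hM : M.PosSemidef) (x y : ι → ℝ) :
    (x ⬝ᵥ (M *ᵥ y)) ^ 2 ≤ (x ⬝ᵥ (M *ᵥ x)) * (y ⬝ᵥ (M *ᵥ y)) := by
  obtain ⟨B, rfl⟩ := hM.exists_eq_transpose_mul_self
  simp only [dotProduct_transpose_mul_mulVec]
  exact sq_dotProduct_le _ _

theorem PosDef.sq_dotProduct_self_le [DecidableEq ι] {V : Matrix ι ι ℝ} (hV : V.PosDef)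
    (θ : ι → ℝ) :
    (θ ⬝ᵥ θ) ^ 2 ≤ (θ ⬝ᵥ (V⁻¹ *ᵥ θ)) * (θ ⬝ᵥ (V *ᵥ θ)) := by
  have hVw : V *ᵥ (V⁻¹ *ᵥ θ) = θ := by
    rw [mulVec_mulVec, mul_nonsing_inv V ((isUnit_iff_isUnit_det V).mp hV.isUnit), one_mulVec]
  have hsymm : ∀ x y : ι → ℝ, x ⬝ᵥ (V *ᵥ y) = (V *ᵥ x) ⬝ᵥ y := fun x y => by
    rw [dotProduct_mulVec, ← mulVec_transpose, (isHermitian_iff_isSymm.mp hV.isHermitian).eq]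
  have := hV.posSemidef.sq_dotProduct_mulVec_le (V⁻¹ *ᵥ θ) θ
  rwa [hsymm, hVw, dotProduct_comm (V⁻¹ *ᵥ θ)] at this

theorem PosDef.one_le_trace_mul_dotProduct_inv_mulVec [DecidableEq ι] {V : Matrix ι ι ℝ}
    (hV : V.PosDef) {θ : ι → ℝ} (hθ : θ ⬝ᵥ θ = 1) : 1 ≤ V.trace * (θ ⬝ᵥ (V⁻¹ *ᵥ θ)) := by
  have h := hV.sq_dotProduct_self_le θ
  have hle := hV.posSemidef.dotProduct_mulVec_le_trace_mul θ
  have hpos : 0 ≤ θ ⬝ᵥ (V⁻¹ *ᵥ θ) := by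
    simpa using hV.inv.posSemidef.dotProduct_mulVec_nonneg θ
  rw [hθ] at h hle
  nlinarith

end Matrix

theorem LinearIndependent.exists_pos_mul_dotProduct_self_le {ι : Type*} [Fintype ι]
    [DecidableEq ι] {b : ι → ι → ℝ} (hb : LinearIndependent ℝ b) :
    ∃ c > 0, ∀ w : ι → ℝ, c * (w ⬝ᵥ w) ≤ ∑ j, (b j ⬝ᵥ w) ^ 2 := by
  set B : Matrix ι ι ℝ := Matrix.of b
  have hB : IsUnit B.det :=
    (B.isUnit_iff_isUnit_det).mp (Matrix.linearIndependent_rows_iff_isUnit.mp hb)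
  set T := (B⁻¹ᵀ * B⁻¹).trace
  have hT : 0 ≤ T := by
    simpa using (posSemidef_conjTranspose_mul_self B⁻¹).trace_nonneg
  refine ⟨(T + 1)⁻¹, by positivity, fun w => ?_⟩
  have hS : (B *ᵥ w) ⬝ᵥ (B *ᵥ w) = ∑ j, (b j ⬝ᵥ w) ^ 2 := by
    simp only [dotProduct, sq, mulVec, B, Matrix.of_apply]
  have hw : w ⬝ᵥ w ≤ T * ∑ j, (b j ⬝ᵥ w) ^ 2 := by
    have := Matrix.mulVec_dotProduct_mulVec_self_le B⁻¹ (B *ᵥ w)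
    rwa [mulVec_mulVec, nonsing_inv_mul B hB, one_mulVec, hS] at this
  rw [inv_mul_le_iff₀ (by positivity)]
  nlinarith [sum_nonneg fun j (_ : j ∈ univ) => sq_nonneg (b j ⬝ᵥ w)]

theorem GenPosAbout.exists_pos_mul_dotProduct_self_le {p n : ℕ} {t : Fin p → ℝ}
    {X : Fin n → Fin p → ℝ} (hX : GenPosAbout t X) (hpn : p ≤ n) :
    ∃ c > 0, ∀ w : Fin p → ℝ, c * (w ⬝ᵥ w) ≤ ∑ i, ((X i - t) ⬝ᵥ w) ^ 2 := by
  obtain ⟨c, hc, hcw⟩ := (hX _ (Fin.castLE_injective hpn)).exists_pos_mul_dotProduct_self_le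
  refine ⟨c, hc, fun w => (hcw w).trans ?_⟩
  exact (sum_map univ (Fin.castLEEmb hpn) fun i => ((X i - t) ⬝ᵥ w) ^ 2).symm.trans_le
    (sum_le_univ_sum_of_nonneg fun i => sq_nonneg _)

namespace Cond21

variable {p : ℕ} {u : ℝ → ℝ} {K : ℝ}

theorem K_pos (hu : Cond21 p u K) : 0 < K :=
  (Nat.cast_nonneg p).trans_lt hu.K_gt_p

theorem psi_pos (hu : Cond21 p u K) {s : ℝ} (hs : 0 < s) : 0 < s * u s := by
  by_contra! h
  have hhalf : 0 < s / 2 := half_pos hs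
  have hle := hu.psi_mono hhalf (half_le_self hs.le)
  have hlt := hu.psi_strictMono hhalf (half_lt_self hs) (by linarith [hu.K_pos])
  nlinarith [hu.nonneg hhalf]

theorem u_pos (hu : Cond21 p u K) {s : ℝ} (hs : 0 < s) : 0 < u s :=
  pos_of_mul_pos_right (hu.psi_pos hs) hs.le

theorem exists_lt_psi (hu : Cond21 p u K) {a : ℝ} (ha : a < K) : ∃ s > 0, a < s * u s := by
  obtain ⟨_, ⟨s, hs, rfl⟩, has, -⟩ := hu.psi_lub.exists_between ha
  exact ⟨s, hs, has⟩

theorem mul_dotProduct_sq_le (hu : Cond21 p u K) {W : Matrix (Fin p) (Fin p) ℝ} (hW : W.PosDef)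
    {z : Fin p → ℝ} {S : ℝ} (hS : z ⬝ᵥ (W *ᵥ z) ≤ S) (w : Fin p → ℝ) :
    u S * (z ⬝ᵥ w) ^ 2 ≤ u (z ⬝ᵥ (W *ᵥ z)) * (z ⬝ᵥ w) ^ 2 := by
  rcases eq_or_ne z 0 with rfl | hz
  · simp
  · have hpos : 0 < z ⬝ᵥ (W *ᵥ z) := by simpa using hW.dotProduct_mulVec_pos hz
    exact mul_le_mul_of_nonneg_right (hu.antitone hpos hS) (sq_nonneg _)

end Cond21

section MEstimate

variable {p : ℕ} {u : ℝ → ℝ} {t : Fin p → ℝ} {V : Matrix (Fin p) (Fin p) ℝ}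

theorem IsScatterMEstimate.dotProduct_mulVec_eq {N : ℕ} {z : Fin N → Fin p → ℝ}
    (hV : IsScatterMEstimate u t z V) (w : Fin p → ℝ) :
    w ⬝ᵥ (V *ᵥ w) =
      (N : ℝ)⁻¹ * ∑ i, u ((z i - t) ⬝ᵥ (V⁻¹ *ᵥ (z i - t))) * ((z i - t) ⬝ᵥ w) ^ 2 := by
  conv_lhs => rw [hV.2]
  rw [smul_mulVec, dotProduct_smul, smul_eq_mul, sum_mulVec, dotProduct_sum]
  congr 1
  refine sum_congr rfl fun i _ => ?_
  split_ifs with h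
  · simp [h]
  · rw [smul_mulVec, vecMulVec_mulVec, op_smul_eq_smul, dotProduct_smul, dotProduct_smul,
      dotProduct_comm w, smul_eq_mul, smul_eq_mul, sq]

theorem IsScatterMEstimate.dotProduct_mulVec_eq_of_append_const {n m : ℕ}
    {X : Fin n → Fin p → ℝ} {y : Fin p → ℝ}
    (hV : IsScatterMEstimate u t (Fin.append X fun _ : Fin m => y) V) (w : Fin p → ℝ) :
    w ⬝ᵥ (V *ᵥ w) = ((n : ℝ) + m)⁻¹ *
      (∑ i, u ((X i - t) ⬝ᵥ (V⁻¹ *ᵥ (X i - t))) * ((X i - t) ⬝ᵥ w) ^ 2 +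
        m * (u ((y - t) ⬝ᵥ (V⁻¹ *ᵥ (y - t))) * ((y - t) ⬝ᵥ w) ^ 2)) := by
  rw [hV.dotProduct_mulVec_eq, Fin.sum_univ_add]
  simp only [Fin.append_left, Fin.append_right, sum_const, card_univ, Fintype.card_fin,
    nsmul_eq_mul, Nat.cast_add]

end MEstimate

theorem IsScatterMEstimate.breakdown_bound {p n m : ℕ} {u : ℝ → ℝ} {K : ℝ}
    (hu : Cond21 p u K) {t : Fin p → ℝ} {X : Fin n → Fin p → ℝ} {c B C r : ℝ}
    {θ : Fin p → ℝ} {V : Matrix (Fin p) (Fin p) ℝ}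
    (hc : 0 ≤ c) (hgram : ∀ w, c * (w ⬝ᵥ w) ≤ ∑ i, ((X i - t) ⬝ᵥ w) ^ 2)
    (hB : 0 < B) (hXB : ∀ i, (X i - t) ⬝ᵥ (X i - t) ≤ B) (hθ : θ ⬝ᵥ θ = 1) (hr : 0 < r)
    (hV : IsScatterMEstimate u t (Fin.append X fun _ : Fin m => t + r • θ) V)
    (hVC : V.trace ≤ C) (hViC : V⁻¹.trace ≤ C) :
    u (C * B) * c / C + m * (r ^ 2 / C * u (r ^ 2 / C)) ≤ n + m := by
  have hVpd := hV.1
  set w := V⁻¹ *ᵥ θ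
  set q := θ ⬝ᵥ w
  have hθ0 : θ ≠ 0 := by rintro rfl; simp at hθ
  have hq : 0 < q := by simpa using hVpd.inv.dotProduct_mulVec_pos hθ0
  have hCq : 1 ≤ C * q :=
    (hVpd.one_le_trace_mul_dotProduct_inv_mulVec hθ).trans (by gcongr)
  have hC : 0 < C := pos_of_mul_pos_left (one_pos.trans_le hCq) hq.le
  have hfix : q = ((n : ℝ) + m)⁻¹ *
      (∑ i, u ((X i - t) ⬝ᵥ (V⁻¹ *ᵥ (X i - t))) * ((X i - t) ⬝ᵥ w) ^ 2 +
        m * (u (r ^ 2 * q) * (r * q) ^ 2)) := by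
    have hVw : V *ᵥ w = θ := by
      rw [mulVec_mulVec, mul_nonsing_inv V ((isUnit_iff_isUnit_det V).mp hVpd.isUnit),
        one_mulVec]
    have := hV.dotProduct_mulVec_eq_of_append_const w
    rw [hVw, dotProduct_comm, add_sub_cancel_left, mulVec_smul, dotProduct_smul,
      smul_dotProduct] at this
    rw [show θ ⬝ᵥ V⁻¹ *ᵥ θ = q from rfl] at this
    simpa only [smul_eq_mul, ← mul_assoc, ← sq] using this
  have hX : u (C * B) * c * q ^ 2 ≤
      ∑ i, u ((X i - t) ⬝ᵥ (V⁻¹ *ᵥ (X i - t))) * ((X i - t) ⬝ᵥ w) ^ 2 := by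
    have hqw : q ^ 2 ≤ w ⬝ᵥ w := by simpa [hθ] using sq_dotProduct_le θ w
    have hsX : ∀ i, (X i - t) ⬝ᵥ (V⁻¹ *ᵥ (X i - t)) ≤ C * B := fun i =>
      (hVpd.inv.posSemidef.dotProduct_mulVec_le_trace_mul _).trans
        (mul_le_mul hViC (hXB i) (by simpa using dotProduct_star_self_nonneg (X i - t)) hC.le)
    calc u (C * B) * c * q ^ 2 ≤ u (C * B) * ∑ i, ((X i - t) ⬝ᵥ w) ^ 2 := by
          rw [mul_assoc]
          exact mul_le_mul_of_nonneg_left ((mul_le_mul_of_nonneg_left hqw hc).trans (hgram w))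
            (hu.nonneg (mul_pos hC hB))
      _ ≤ _ := by
          rw [mul_sum]
          exact sum_le_sum fun i _ => hu.mul_dotProduct_sq_le hVpd.inv (hsX i) w
  have hψ : r ^ 2 / C * u (r ^ 2 / C) ≤ r ^ 2 * q * u (r ^ 2 * q) := by
    refine hu.psi_mono (by positivity) ?_
    rw [div_le_iff₀ hC]
    nlinarith
  have hN : (n : ℝ) + m ≠ 0 := by
    intro h
    rw [h, _root_.inv_zero, zero_mul] at hfix
    exact hq.ne' hfix
  rw [eq_inv_mul_iff_mul_eq₀ hN] at hfix
  have hδ : u (C * B) * c / C ≤ u (C * B) * c * q := by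
    rw [div_le_iff₀ hC]
    nlinarith [mul_nonneg (hu.nonneg (mul_pos hC hB)) hc]
  refine le_of_mul_le_mul_right ?_ hq
  nlinarith [mul_le_mul_of_nonneg_right hδ hq.le,
    mul_le_mul_of_nonneg_left (mul_le_mul_of_nonneg_right hψ hq.le) (Nat.cast_nonneg m)]

/-- Theorem 3.1 (breakdown by a distant coplanar point mass): if `ε_m = m/(n+m) ≥ 1/K`
and `Y_r` consists of `m` copies of `t + rθ` for a fixed unit vector `θ`, then there is
no constant `C` such that for every `r > 0` an M-estimate `V_r` for `X ∪ Y_r` about `t`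
exists with `trace(V_r) + trace(V_r⁻¹) ≤ C`. -/
theorem statement10 (p n m : ℕ) (hp : 1 ≤ p) (hm : 1 ≤ m) (hn : p * (p - 1) < n)
    (t : Fin p → ℝ) (u : ℝ → ℝ) (K : ℝ) (hu : Cond21 p u K)
    (X : Fin n → Fin p → ℝ) (hX : GenPosAbout t X)
    (θ : Fin p → ℝ) (hθ : θ ⬝ᵥ θ = 1)
    (heps : 1 / K ≤ (m : ℝ) / ((n : ℝ) + m)) :
    ¬ ∃ C : ℝ, ∀ r : ℝ, 0 < r →
      ∃ V : Matrix (Fin p) (Fin p) ℝ,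
        IsScatterMEstimate u t (Fin.append X (fun _ : Fin m => t + r • θ)) V ∧
        V.trace + (V⁻¹).trace ≤ C := by
  rintro ⟨C, hC⟩
  have hpn : p ≤ n := by
    rcases Nat.lt_or_ge p 2 with h | h
    · interval_cases p; omega
    · exact (Nat.le_mul_of_pos_right p (by omega)).trans hn.le
  obtain ⟨c, hc, hgram⟩ := hX.exists_pos_mul_dotProduct_self_le hpn
  set B := 1 + ∑ i, (X i - t) ⬝ᵥ (X i - t)
  have hnonneg : ∀ i, 0 ≤ (X i - t) ⬝ᵥ (X i - t) := fun i => by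
    simpa using dotProduct_star_self_nonneg (X i - t)
  have hXB : ∀ i, (X i - t) ⬝ᵥ (X i - t) ≤ B := fun i =>
    (single_le_sum (fun j _ => hnonneg j) (mem_univ i)).trans (le_add_of_nonneg_left zero_le_one)
  have hB : 0 < B := add_pos_of_pos_of_nonneg one_pos (sum_nonneg fun i _ => hnonneg i)
  have hC0 : 0 < C := by
    have : Nonempty (Fin p) := ⟨⟨0, hp⟩⟩
    obtain ⟨V, hV, hVC⟩ := hC 1 one_pos
    linarith [hV.1.trace_pos, hV.1.inv.trace_pos]
  set δ := u (C * B) * c / C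
  have hδ : 0 < δ := div_pos (mul_pos (hu.u_pos (mul_pos hC0 hB)) hc) hC0
  have hm0 : (0 : ℝ) < m := by exact_mod_cast hm
  obtain ⟨s, hs, hψs⟩ := hu.exists_lt_psi (a := (n + m - δ) / m) (by
    rw [div_le_div_iff₀ hu.K_pos (by positivity)] at heps
    rw [div_lt_iff₀ hm0]
    linarith)
  obtain ⟨V, hV, hVC⟩ := hC (Real.sqrt (C * s)) (by positivity)
  have hbound := hV.breakdown_bound (C := C) hu hc.le hgram hB hXB hθ (by positivity)
    (by linarith [hV.1.inv.posSemidef.trace_nonneg]) (by linarith [hV.1.posSemidef.trace_nonneg])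
  rw [Real.sq_sqrt (by positivity), mul_div_cancel_left₀ _ hC0.ne'] at hbound
  rw [div_lt_iff₀ hm0] at hψs
  linarith
end
end

section
/- Suppose u satisfies Condition 2.1 with constant K and let r > 0. Then there exists a constant c > 0, depending only on X, u, m and r, such that for every Y ∈ C_{2,r,m}(X) and every M-estimate of scatter V for Z = X ∪ Y about t, trace(V) ≥ c. -/
open Matrix Finset Filter

noncomputable section

/-! Taking traces in `V⁻¹V = I` turns the fixed-point equation into `Σᵢ ψ(sᵢ) = N p`, so
some `ψ(sᵢ) ≤ p`. Since `sup ψ = K > p` there is `s₀` with `ψ(s₀) > p`, and monotonicity of `ψ`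
gives `sᵢ ≤ s₀`. On the other hand `‖zᵢ - t‖² ≤ trace V · sᵢ` (as `V ≤ trace V · I`), and every
point lies at squared distance at least `δ = min (minⱼ ‖xⱼ - t‖²) r > 0` from `t`, the `xⱼ` being
different from `t` by general position. Hence `trace V ≥ δ / s₀`. -/

namespace Matrix

variable {l m n : Type*} [Fintype l] [Fintype m] [Fintype n]

theorem mulVec_dotProduct_mulVec_le_trace_mul_transpose (A : Matrix l m ℝ)
    (v : m → ℝ) : A *ᵥ v ⬝ᵥ A *ᵥ v ≤ (A * Aᵀ).trace * (v ⬝ᵥ v) := by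
  have row_bound : ∀ i, (A *ᵥ v) i * (A *ᵥ v) i ≤ (A * Aᵀ) i i * (v ⬝ᵥ v) := fun i => by
    simpa only [mulVec, dotProduct, mul_apply, transpose_apply, ← sq] using
      Finset.sum_mul_sq_le_sq_mul_sq Finset.univ (A i) v
  calc A *ᵥ v ⬝ᵥ A *ᵥ v = ∑ i, (A *ᵥ v) i * (A *ᵥ v) i := rfl
    _ ≤ ∑ i, (A * Aᵀ) i i * (v ⬝ᵥ v) := Finset.sum_le_sum fun i _ => row_bound i
    _ = (A * Aᵀ).trace * (v ⬝ᵥ v) := by rw [trace, Finset.sum_mul]; rfl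

theorem card_eq_sum_mul_dotProduct_nonsing_inv_mulVec {ι R : Type*} [Fintype ι] [Field R]
    [DecidableEq n] {V : Matrix n n R} (hV : IsUnit V.det) (w : ι → R) (d : ι → n → R)
    (hVd : V = ∑ i, w i • vecMulVec (d i) (d i)) :
    (Fintype.card n : R) = ∑ i, w i * (d i ⬝ᵥ V⁻¹ *ᵥ d i) := by
  calc (Fintype.card n : R) = (V⁻¹ * V).trace := by rw [nonsing_inv_mul V hV, trace_one]
    _ = ∑ i, w i * (d i ⬝ᵥ V⁻¹ *ᵥ d i) := by
      nth_rw 2 [hVd]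
      simp only [Matrix.mul_sum, Matrix.mul_smul, mul_vecMulVec, trace_sum, trace_smul,
        trace_vecMulVec, smul_eq_mul, dotProduct_comm (V⁻¹ *ᵥ _)]

open scoped MatrixOrder in
theorem PosDef.dotProduct_self_le_trace_mul [DecidableEq n] {V : Matrix n n ℝ} (hV : V.PosDef)
    (d : n → ℝ) : d ⬝ᵥ d ≤ V.trace * (d ⬝ᵥ V⁻¹ *ᵥ d) := by
  -- With `V = BᵀB`, `d = Bᵀ(Bw)` for `w = V⁻¹d`, and `‖Bw‖² = w ⬝ᵥ d`.
  obtain ⟨B, rfl⟩ := CStarAlgebra.nonneg_iff_eq_star_mul_self.mp hV.posSemidef.nonneg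
  rw [star_eq_conjTranspose, conjTranspose_eq_transpose_of_trivial] at hV ⊢
  set w := (Bᵀ * B)⁻¹ *ᵥ d
  have hw : Bᵀ *ᵥ (B *ᵥ w) = d := by
    rw [mulVec_mulVec, mulVec_mulVec, mul_nonsing_inv _ ((isUnit_iff_isUnit_det _).mp hV.isUnit),
      one_mulVec]
  calc d ⬝ᵥ d = Bᵀ *ᵥ (B *ᵥ w) ⬝ᵥ Bᵀ *ᵥ (B *ᵥ w) := by rw [hw]
    _ ≤ (Bᵀ * Bᵀᵀ).trace * (B *ᵥ w ⬝ᵥ B *ᵥ w) :=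
      mulVec_dotProduct_mulVec_le_trace_mul_transpose _ _
    _ = (Bᵀ * B).trace * (d ⬝ᵥ w) := by
      rw [transpose_transpose, dotProduct_mulVec, ← mulVec_transpose, hw]

end Matrix

theorem sqDist_pos {p : ℕ} {t z : Fin p → ℝ} (hz : z ≠ t) : 0 < sqDist t z := by
  simpa [sqDist] using dotProduct_star_self_pos_iff.mpr (sub_ne_zero.mpr hz)

theorem GenPosAbout.ne_center {p n : ℕ} {t : Fin p → ℝ} {x : Fin n → Fin p → ℝ}
    (hx : GenPosAbout t x) (hp : 0 < p) (hpn : p ≤ n) (i : Fin n) : x i ≠ t := by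
  let f := Equiv.swap (Fin.castLE hpn ⟨0, hp⟩) i ∘ Fin.castLE hpn
  have hf : f ⟨0, hp⟩ = i := Equiv.swap_apply_left _ _
  have := (hx f ((Equiv.injective _).comp (Fin.castLE_injective hpn))).ne_zero ⟨0, hp⟩
  rwa [hf, sub_ne_zero] at this

theorem Cond21.exists_natCast_lt_psi {p : ℕ} {u : ℝ → ℝ} {K : ℝ} (hu : Cond21 p u K) :
    ∃ s₀, 0 < s₀ ∧ (p : ℝ) < s₀ * u s₀ := by
  obtain ⟨_, ⟨s₀, hs₀, rfl⟩, hlt, -⟩ := hu.psi_lub.exists_between hu.K_gt_p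
  exact ⟨s₀, hs₀, hlt⟩

namespace IsScatterMEstimate

variable {p N : ℕ} {u : ℝ → ℝ} {t : Fin p → ℝ} {z : Fin N → Fin p → ℝ}
  {V : Matrix (Fin p) (Fin p) ℝ}

theorem eq_smul_sum (hV : IsScatterMEstimate u t z V) :
    V = (N : ℝ)⁻¹ • ∑ i, u ((z i - t) ⬝ᵥ V⁻¹ *ᵥ (z i - t)) • vecMulVec (z i - t) (z i - t) := by
  refine hV.2.trans (congrArg _ (Finset.sum_congr rfl fun i _ => ?_))
  split_ifs with h <;> simp [h]

theorem sum_psi_eq (hV : IsScatterMEstimate u t z V) (hN : N ≠ 0) :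
    ∑ i, (z i - t) ⬝ᵥ V⁻¹ *ᵥ (z i - t) * u ((z i - t) ⬝ᵥ V⁻¹ *ᵥ (z i - t)) = N * p := by
  have hp := card_eq_sum_mul_dotProduct_nonsing_inv_mulVec
    ((isUnit_iff_isUnit_det _).mp hV.1.isUnit)
    (fun i => (N : ℝ)⁻¹ * u ((z i - t) ⬝ᵥ V⁻¹ *ᵥ (z i - t))) (fun i => z i - t)
    (hV.eq_smul_sum.trans (by simp only [Finset.smul_sum, smul_smul]))
  rw [Fintype.card_fin] at hp
  rw [hp, Finset.mul_sum]
  refine Finset.sum_congr rfl fun i _ => ?_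
  field_simp

theorem le_trace_mul {K s₀ δ : ℝ} (hV : IsScatterMEstimate u t z V) (hu : Cond21 p u K)
    (hs₀ : 0 < s₀) (hψ : (p : ℝ) < s₀ * u s₀) (hN : 0 < N) (hδ : ∀ i, δ ≤ sqDist t (z i)) :
    δ ≤ V.trace * s₀ := by
  have hsum : ∑ i, (z i - t) ⬝ᵥ V⁻¹ *ᵥ (z i - t) * u ((z i - t) ⬝ᵥ V⁻¹ *ᵥ (z i - t)) ≤
      ∑ _i : Fin N, (p : ℝ) := by
    rw [hV.sum_psi_eq hN.ne']
    simp
  obtain ⟨i, -, hi⟩ := Finset.exists_le_of_sum_le ⟨⟨0, hN⟩, Finset.mem_univ _⟩ hsum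
  have hs : (z i - t) ⬝ᵥ V⁻¹ *ᵥ (z i - t) ≤ s₀ :=
    le_of_not_gt fun h => (hψ.trans_le (hu.psi_mono hs₀ h.le)).not_ge hi
  calc δ ≤ (z i - t) ⬝ᵥ (z i - t) := hδ i
    _ ≤ V.trace * ((z i - t) ⬝ᵥ V⁻¹ *ᵥ (z i - t)) := hV.1.dotProduct_self_le_trace_mul _
    _ ≤ V.trace * s₀ := mul_le_mul_of_nonneg_left hs hV.1.posSemidef.trace_nonneg

end IsScatterMEstimate

theorem statement12_general (p n m : ℕ) (hp : 1 ≤ p) (hn : p * (p - 1) < n)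
    (t : Fin p → ℝ) (u : ℝ → ℝ) (K : ℝ) (hu : Cond21 p u K)
    (X : Fin n → Fin p → ℝ) (hX : GenPosAbout t X)
    (r : ℝ) (hr : 0 < r) :
    ∃ c : ℝ, 0 < c ∧ ∀ Y : Fin m → Fin p → ℝ, InC2 r t Y →
      ∀ V : Matrix (Fin p) (Fin p) ℝ,
        IsScatterMEstimate u t (Fin.append X Y) V → c ≤ V.trace := by
  have hpn : p ≤ n := by have := Nat.le_mul_of_pos_left (p - 1) hp; omega
  have : Nonempty (Fin n) := ⟨⟨0, by omega⟩⟩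
  obtain ⟨i₀, hi₀⟩ := Finite.exists_min fun i => sqDist t (X i)
  obtain ⟨s₀, hs₀, hψ⟩ := hu.exists_natCast_lt_psi
  have hδ : 0 < min (sqDist t (X i₀)) r := lt_min (sqDist_pos (hX.ne_center hp hpn i₀)) hr
  refine ⟨min (sqDist t (X i₀)) r / s₀, div_pos hδ hs₀, fun Y hY V hV =>
    (div_le_iff₀ hs₀).2 (hV.le_trace_mul hu hs₀ hψ (by omega) fun i => ?_)⟩
  refine Fin.addCases (fun i => ?_) (fun j => ?_) i
  · simpa using (min_le_left _ _).trans (hi₀ i)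
  · simpa using (min_le_right _ _).trans (hY j).le

/-- Lemma 4.1.iii: for any `m`, `trace(V)` is bounded away from zero uniformly over all
`Y ∈ C_{2,r,m}(X)` and all M-estimates `V` for `X ∪ Y`. -/
theorem statement12 (p n m : ℕ) (hp : 1 ≤ p) (hm : 1 ≤ m) (hn : p * (p - 1) < n)
    (t : Fin p → ℝ) (u : ℝ → ℝ) (K : ℝ) (hu : Cond21 p u K)
    (X : Fin n → Fin p → ℝ) (hX : GenPosAbout t X)
    (r : ℝ) (hr : 0 < r) :
    ∃ c : ℝ, 0 < c ∧ ∀ Y : Fin m → Fin p → ℝ, InC2 r t Y →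
      ∀ V : Matrix (Fin p) (Fin p) ℝ,
        IsScatterMEstimate u t (Fin.append X Y) V → c ≤ V.trace :=
  statement12_general p n m hp hn t u K hu X hX r hr
end
end

section
/- (Theorem 4.1.i, upper bound: breakdown by distant non-coplanar outliers.) Suppose u satisfies Condition 2.1 with constant K and ε_m = m/(n+m) > p/K. Let θ_1,…,θ_m be unit vectors in ℝ^p such that for every R > 0 the list X ∪ (t + Rθ_1, …, t + Rθ_m) is in general position about t. Then there is no constant C < ∞ such that for every R > 0 an M-estimate of scatter V_R for X ∪ (t + Rθ_1, …, t + Rθ_m) about t exists with trace(V_R) + trace(V_R⁻¹) ≤ C. -/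
/-!
Taking the trace of `V⁻¹` times the fixed-point equation gives `(1/N) ∑ ψ(sᵢ) = p`, where
`ψ(s) = s u(s)`. If `trace V ≤ C`, Cauchy–Schwarz gives `R² ≤ trace V · sᵢ` for an outlier
`t + R θᵢ`, so `sᵢ → ∞` as `R → ∞`. Since `p (n+m)/m < K = sup ψ`, for large `R` each of the
`m` outliers has `ψ(sᵢ) > p (n+m)/m`, and as `ψ ≥ 0` the average of the `ψ(sᵢ)` exceeds `p`.
-/

open Matrix Finset Filter

noncomputable section

namespace Matrix

variable {n : Type*} [Fintype n]

theorem IsHermitian.dotProduct_mulVec_comm {M : Matrix n n ℝ} (hM : M.IsHermitian)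
    (x y : n → ℝ) : y ⬝ᵥ (M *ᵥ x) = x ⬝ᵥ (M *ᵥ y) := by
  rw [dotProduct_mulVec, ← mulVec_transpose, ← conjTranspose_eq_transpose_of_trivial,
    hM.eq, dotProduct_comm]

variable [DecidableEq n]

theorem PosSemidef.dotProduct_mulVec_sq_le {M : Matrix n n ℝ} (hM : M.PosSemidef)
    (x y : n → ℝ) : (x ⬝ᵥ (M *ᵥ y)) ^ 2 ≤ (x ⬝ᵥ (M *ᵥ x)) * (y ⬝ᵥ (M *ᵥ y)) := by
  have := LinearMap.BilinForm.apply_mul_apply_le_of_forall_zero_le (toLinearMap₂' ℝ M)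
    (fun v => by simpa [toLinearMap₂'_apply'] using hM.dotProduct_mulVec_nonneg v) x y
  simpa only [toLinearMap₂'_apply', hM.isHermitian.dotProduct_mulVec_comm x y, ← sq] using this

theorem PosSemidef.dotProduct_mulVec_le_mul_trace {M : Matrix n n ℝ} (hM : M.PosSemidef)
    (v : n → ℝ) : v ⬝ᵥ (M *ᵥ v) ≤ (v ⬝ᵥ v) * M.trace := by
  set q := v ⬝ᵥ (M *ᵥ v)
  have hv : 0 ≤ v ⬝ᵥ v := dotProduct_self_star_nonneg v
  have h₁ : q ^ 2 ≤ (v ⬝ᵥ v) * ((M *ᵥ v) ⬝ᵥ (M *ᵥ v)) := by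
    simpa using PosSemidef.one.dotProduct_mulVec_sq_le v (M *ᵥ v)
  -- Cauchy–Schwarz for `M` between each basis vector `eᵢ` and `v`: `(M v)ᵢ² ≤ Mᵢᵢ q`
  have h₂ : (M *ᵥ v) ⬝ᵥ (M *ᵥ v) ≤ M.trace * q := by
    rw [trace, Finset.sum_mul]
    refine Finset.sum_le_sum fun i _ => ?_
    simpa [mulVec_single_one, single_one_dotProduct, ← sq] using
      hM.dotProduct_mulVec_sq_le (Pi.single i 1) v
  have hq : 0 ≤ q := by simpa using hM.dotProduct_mulVec_nonneg v
  rcases hq.eq_or_lt with hq | hq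
  · rw [← hq]
    exact mul_nonneg hv hM.trace_nonneg
  · refine le_of_mul_le_mul_right ?_ hq
    calc q * q = q ^ 2 := (sq q).symm
      _ ≤ (v ⬝ᵥ v) * (M.trace * q) := h₁.trans (mul_le_mul_of_nonneg_left h₂ hv)
      _ = (v ⬝ᵥ v) * M.trace * q := by ring

theorem PosDef.dotProduct_self_le_trace_mul_inv {M : Matrix n n ℝ} (hM : M.PosDef)
    (v : n → ℝ) : v ⬝ᵥ v ≤ M.trace * (v ⬝ᵥ (M⁻¹ *ᵥ v)) := by
  -- Cauchy–Schwarz for the form of `M⁻¹` between `v` and `M v`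
  have hcs : (v ⬝ᵥ v) ^ 2 ≤ (v ⬝ᵥ (M⁻¹ *ᵥ v)) * (v ⬝ᵥ (M *ᵥ v)) := by
    have := hM.inv.posSemidef.dotProduct_mulVec_sq_le v (M *ᵥ v)
    rwa [mulVec_mulVec, nonsing_inv_mul _ hM.det_pos.ne'.isUnit, one_mulVec,
      dotProduct_comm (M *ᵥ v)] at this
  have hle := hM.posSemidef.dotProduct_mulVec_le_mul_trace v
  have hinv : 0 ≤ v ⬝ᵥ (M⁻¹ *ᵥ v) := by
    simpa using hM.inv.posSemidef.dotProduct_mulVec_nonneg v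
  have hv : 0 ≤ v ⬝ᵥ v := dotProduct_self_star_nonneg v
  rcases hv.eq_or_lt with hv | hv
  · rw [← hv]
    exact mul_nonneg hM.posSemidef.trace_nonneg hinv
  · refine le_of_mul_le_mul_left ?_ hv
    calc (v ⬝ᵥ v) * (v ⬝ᵥ v) = (v ⬝ᵥ v) ^ 2 := (sq _).symm
      _ ≤ (v ⬝ᵥ (M⁻¹ *ᵥ v)) * ((v ⬝ᵥ v) * M.trace) :=
        hcs.trans (mul_le_mul_of_nonneg_left hle hinv)
      _ = (v ⬝ᵥ v) * (M.trace * (v ⬝ᵥ (M⁻¹ *ᵥ v))) := by ring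

end Matrix

section Mahalanobis

variable {n : Type*} [Fintype n] [DecidableEq n]

def mahalanobisSq (V : Matrix n n ℝ) (t z : n → ℝ) : ℝ :=
  (z - t) ⬝ᵥ (V⁻¹ *ᵥ (z - t))

theorem Matrix.PosDef.mahalanobisSq_nonneg {V : Matrix n n ℝ} (hV : V.PosDef) (t z : n → ℝ) :
    0 ≤ mahalanobisSq V t z := by
  simpa only [mahalanobisSq, star_trivial] using
    hV.inv.posSemidef.dotProduct_mulVec_nonneg (z - t)

theorem Matrix.PosDef.lt_mahalanobisSq_add_smul {V : Matrix n n ℝ} (hV : V.PosDef) (t : n → ℝ)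
    {θ : n → ℝ} (hθ : θ ⬝ᵥ θ = 1) {C s₀ R : ℝ} (hVC : V.trace ≤ C) (hR : 0 < R)
    (hRC : s₀ * C < R ^ 2) : s₀ < mahalanobisSq V t (t + R • θ) := by
  have hs := hV.mahalanobisSq_nonneg t (t + R • θ)
  have hR2 : R ^ 2 ≤ C * mahalanobisSq V t (t + R • θ) := by
    calc R ^ 2 = (R • θ) ⬝ᵥ (R • θ) := by simp [hθ, sq]
      _ ≤ V.trace * mahalanobisSq V t (t + R • θ) := by
        simpa [mahalanobisSq] using hV.dotProduct_self_le_trace_mul_inv (R • θ)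
      _ ≤ C * mahalanobisSq V t (t + R • θ) := mul_le_mul_of_nonneg_right hVC hs
  have hC : 0 < C := pos_of_mul_pos_left ((pow_pos hR 2).trans_le hR2) hs
  exact lt_of_mul_lt_mul_right (by linarith) hC.le

end Mahalanobis

theorem IsScatterMEstimate.inv_card_mul_sum_eq {p N : ℕ} {u : ℝ → ℝ} {t : Fin p → ℝ}
    {z : Fin N → Fin p → ℝ} {V : Matrix (Fin p) (Fin p) ℝ} (hV : IsScatterMEstimate u t z V) :
    (N : ℝ)⁻¹ * ∑ i, mahalanobisSq V t (z i) * u (mahalanobisSq V t (z i)) = p := by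
  have hterm : ∀ i, (if z i = t then (0 : Matrix (Fin p) (Fin p) ℝ)
      else u (mahalanobisSq V t (z i)) • (vecMulVec (z i - t) (z i - t) * V⁻¹)).trace =
      mahalanobisSq V t (z i) * u (mahalanobisSq V t (z i)) := by
    intro i
    by_cases hi : z i = t
    · simp [hi, mahalanobisSq]
    · rw [if_neg hi, trace_smul, vecMulVec_mul, trace_vecMulVec, smul_eq_mul,
        dotProduct_comm, ← dotProduct_mulVec, mul_comm, mahalanobisSq]
  have hfix : V = (N : ℝ)⁻¹ • ∑ i, if z i = t then (0 : Matrix (Fin p) (Fin p) ℝ)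
      else u (mahalanobisSq V t (z i)) • vecMulVec (z i - t) (z i - t) := hV.2
  have htrace := congrArg (fun M => (M * V⁻¹).trace) hfix
  simp only [mul_nonsing_inv _ hV.1.det_pos.ne'.isUnit, trace_one, Fintype.card_fin,
    Matrix.smul_mul, trace_smul, Finset.sum_mul, trace_sum, ite_mul, zero_mul, hterm,
    smul_eq_mul] at htrace
  exact htrace.symm

theorem Cond21.psi_nonneg {p : ℕ} {u : ℝ → ℝ} {K : ℝ} (hu : Cond21 p u K) {s : ℝ}
    (hs : 0 ≤ s) : 0 ≤ s * u s := by
  rcases hs.eq_or_lt with rfl | hs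
  · simp
  · exact mul_nonneg hs.le (hu.nonneg hs)

theorem Cond21.exists_lt_psi_s16 {p : ℕ} {u : ℝ → ℝ} {K : ℝ} (hu : Cond21 p u K) {c : ℝ}
    (hc : c < K) : ∃ s, 0 < s ∧ c < s * u s := by
  obtain ⟨_, ⟨s, hs, rfl⟩, hcs⟩ := (lt_isLUB_iff hu.psi_lub).mp hc
  exact ⟨s, hs, hcs⟩

theorem IsScatterMEstimate.mul_lt_of_lt_psi {p n m : ℕ} {u : ℝ → ℝ} {K : ℝ} (hu : Cond21 p u K)
    {t : Fin p → ℝ} {X : Fin n → Fin p → ℝ} {Y : Fin m → Fin p → ℝ}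
    {V : Matrix (Fin p) (Fin p) ℝ} (hV : IsScatterMEstimate u t (Fin.append X Y) V) (hm : 0 < m)
    {c : ℝ} (hY : ∀ i, c < mahalanobisSq V t (Y i) * u (mahalanobisSq V t (Y i))) :
    m * c < (n + m) * p := by
  have hsum := hV.inv_card_mul_sum_eq
  rw [Fin.sum_univ_add] at hsum
  simp only [Fin.append_left, Fin.append_right] at hsum
  have hX : 0 ≤ ∑ i, mahalanobisSq V t (X i) * u (mahalanobisSq V t (X i)) :=
    Finset.sum_nonneg fun i _ => hu.psi_nonneg (hV.1.mahalanobisSq_nonneg t (X i))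
  have hYsum : m * c < ∑ i, mahalanobisSq V t (Y i) * u (mahalanobisSq V t (Y i)) := by
    have : Nonempty (Fin m) := Fin.pos_iff_nonempty.mp hm
    simpa using Finset.sum_lt_sum_of_nonempty Finset.univ_nonempty fun i _ => hY i
  have hN : (0 : ℝ) < n + m := by positivity
  rw [Nat.cast_add, inv_mul_eq_iff_eq_mul₀ hN.ne'] at hsum
  linarith

theorem statement16_general (p n m : ℕ) (hm : 1 ≤ m)
    (t : Fin p → ℝ) (u : ℝ → ℝ) (K : ℝ) (hu : Cond21 p u K)
    (X : Fin n → Fin p → ℝ)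
    (θ : Fin m → Fin p → ℝ) (hθ : ∀ i : Fin m, θ i ⬝ᵥ θ i = 1)
    (heps : (p : ℝ) / K < (m : ℝ) / ((n : ℝ) + m)) :
    ¬ ∃ C : ℝ, ∀ R : ℝ, 0 < R →
      ∃ V : Matrix (Fin p) (Fin p) ℝ,
        IsScatterMEstimate u t (Fin.append X (fun i : Fin m => t + R • θ i)) V ∧
        V.trace + (V⁻¹).trace ≤ C := by
  rintro ⟨C, hC⟩
  have hm₀ : (0 : ℝ) < m := by exact_mod_cast hm
  have hK : 0 < K := (Nat.cast_nonneg p).trans_lt hu.K_gt_p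
  have hcK : p * (n + m) / m < K := by
    rw [div_lt_div_iff₀ hK (by positivity)] at heps
    rw [div_lt_iff₀ hm₀]
    linarith
  obtain ⟨s₀, hs₀pos, hs₀⟩ := hu.exists_lt_psi_s16 hcK
  obtain ⟨R, hR, hRC⟩ : ∃ R : ℝ, 0 < R ∧ s₀ * C < R ^ 2 := by
    refine ⟨max 1 (s₀ * C) + 1, by positivity, ?_⟩
    nlinarith [le_max_left 1 (s₀ * C), le_max_right 1 (s₀ * C)]
  obtain ⟨V, hV, hVC⟩ := hC R hR
  have hVC' : V.trace ≤ C := by linarith [hV.1.inv.posSemidef.trace_nonneg]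
  have hlt := hV.mul_lt_of_lt_psi hu hm fun i =>
    hs₀.trans_le (hu.psi_mono hs₀pos (hV.1.lt_mahalanobisSq_add_smul t (hθ i) hVC' hR hRC).le)
  rw [mul_div_cancel₀ _ hm₀.ne'] at hlt
  linarith

/-- Theorem 4.1.i (upper bound: breakdown by distant non-coplanar outliers): if
`ε_m = m/(n+m) > p/K` and `θ₁,…,θ_m` are unit vectors such that for every `R > 0` the
list `X ∪ (t + Rθ₁, …, t + Rθ_m)` is in general position about `t`, then there is no
constant `C` such that for every `R > 0` an M-estimate `V_R` for this contaminated
sample about `t` exists with `trace(V_R) + trace(V_R⁻¹) ≤ C`. -/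
theorem statement16 (p n m : ℕ) (hp : 1 ≤ p) (hm : 1 ≤ m) (hn : p * (p - 1) < n)
    (t : Fin p → ℝ) (u : ℝ → ℝ) (K : ℝ) (hu : Cond21 p u K)
    (X : Fin n → Fin p → ℝ) (hX : GenPosAbout t X)
    (θ : Fin m → Fin p → ℝ) (hθ : ∀ i : Fin m, θ i ⬝ᵥ θ i = 1)
    (hgen : ∀ R : ℝ, 0 < R →
      GenPosAbout t (Fin.append X (fun i : Fin m => t + R • θ i)))
    (heps : (p : ℝ) / K < (m : ℝ) / ((n : ℝ) + m)) :
    ¬ ∃ C : ℝ, ∀ R : ℝ, 0 < R →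
      ∃ V : Matrix (Fin p) (Fin p) ℝ,
        IsScatterMEstimate u t (Fin.append X (fun i : Fin m => t + R • θ i)) V ∧
        V.trace + (V⁻¹).trace ≤ C :=
  statement16_general p n m hm t u K hu X θ hθ heps
end
end
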